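/- Let A and B be finite types, let k ≥ 2 be an integer, and let ρ be a density matrix on A × B. Then ρ ∈ PPT#_k(A:B) if and only if ρ^{T_B} is positive semidefinite. -/

import Mathlib

open Matrix
open scoped ComplexOrder

/-- Total positive semidefinite square root: the PSD square root of `M` if `M` is PSD,
and junk value `0` otherwise. -/
noncomputable def msqrt {n : Type*} [Fintype n] [DecidableEq n]
    (M : Matrix n n ℂ) : Matrix n n ℂ :=
  letI := Classical.dec M.PosSemidef
  if h : M.PosSemidef then
    h.1.eigenvectorUnitary.1 * diagonal ((↑) ∘ (Real.sqrt ·) ∘ h.1.eigenvalues) *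
      (star h.1.eigenvectorUnitary : Matrix n n ℂ)
  else 0

/-- The trace norm `‖M‖₁ = tr √(Mᴴ M)` of a complex matrix, as a real number. -/
noncomputable def traceNorm {n : Type*} [Fintype n] [DecidableEq n]
    (M : Matrix n n ℂ) : ℝ :=
  (msqrt (Mᴴ * M)).trace.re

/-- The partial transpose over the second party `B`:
`M^{T_B}((a,b),(a',b')) = M((a,b'),(a',b))`. -/
def ptB {A B : Type*} (M : Matrix (A × B) (A × B) ℂ) : Matrix (A × B) (A × B) ℂ :=
  fun x y => M (x.1, y.2) (y.1, x.2)

/-- The matrix absolute value `|M| = √(Mᴴ M)`. -/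
noncomputable def matAbs {n : Type*} [Fintype n] [DecidableEq n]
    (M : Matrix n n ℂ) : Matrix n n ℂ :=
  msqrt (Mᴴ * M)

/-- The set `PPT#_k(A:B)`: positive semidefinite `ω₁` such that there exist `ω₂, …, ω_k` with
`|ω_i^{T_B}| ⪯ ω_{i+1}` for all `1 ≤ i ≤ k−1` and `‖ω_k^{T_B}‖₁ ≤ 1`. -/
def PPThashSet {A B : Type*} [Fintype A] [Fintype B] [DecidableEq A] [DecidableEq B]
    (k : ℕ) : Set (Matrix (A × B) (A × B) ℂ) :=
  {σ | σ.PosSemidef ∧ ∃ ω : ℕ → Matrix (A × B) (A × B) ℂ, ω 1 = σ ∧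
    (∀ i, 1 ≤ i → i ≤ k - 1 → (ω (i + 1) - matAbs (ptB (ω i))).PosSemidef) ∧
    traceNorm (ptB (ω k)) ≤ 1}


/-!
For Hermitian `X` we have `X ⪯ |X|`, so `tr X ≤ ‖X‖₁`, with equality only if `|X| - X`, a
positive semidefinite matrix of trace zero, vanishes, i.e. only if `X ⪰ 0`. Along a chain
witnessing `ρ ∈ PPT#_k` this gives `‖ω_i^{T_B}‖₁ ≤ tr ω_{i+1} = tr ω_{i+1}^{T_B} ≤ ‖ω_{i+1}^{T_B}‖₁`,
hence `‖ρ^{T_B}‖₁ ≤ ‖ω_k^{T_B}‖₁ ≤ 1 = tr ρ^{T_B}`, which forces `ρ^{T_B} ⪰ 0`. Conversely, if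
`ρ^{T_B} ⪰ 0` then the alternating chain `ρ, ρ^{T_B}, ρ, …` works, since a positive semidefinite
matrix is its own absolute value.
-/

open scoped MatrixOrder

namespace CFC

variable {A : Type*} [NonUnitalRing A] [StarRing A] [TopologicalSpace A] [Module ℝ A]
  [SMulCommClass ℝ A A] [IsScalarTower ℝ A A]
  [NonUnitalContinuousFunctionalCalculus ℝ A IsSelfAdjoint] [PartialOrder A] [StarOrderedRing A]
  [NonnegSpectrumClass ℝ A] [IsTopologicalRing A] [T2Space A]

lemma le_abs_self (a : A) (ha : IsSelfAdjoint a := by cfc_tac) : a ≤ CFC.abs a := by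
  rw [← sub_nonneg, CFC.abs_sub_self a ha]
  exact smul_nonneg zero_le_two (CFC.negPart_nonneg a)

end CFC

section MatrixAbs

variable {n : Type*} [Fintype n]

lemma re_trace_mono {M N : Matrix n n ℂ} (h : M ≤ N) : M.trace.re ≤ N.trace.re := by
  have := Complex.re_le_re (Matrix.le_iff.mp h).trace_nonneg
  simpa [trace_sub] using this

variable [DecidableEq n]

lemma msqrt_eq_cfcSqrt {M : Matrix n n ℂ} (hM : M.PosSemidef) : msqrt M = CFC.sqrt M := by
  rw [msqrt, dif_pos hM, CFC.sqrt_eq_cfc, cfc_nnreal_eq_real _ M hM.nonneg, hM.1.cfc_eq,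
    IsHermitian.cfc, Unitary.conjStarAlgAut_apply]
  congr 3
  funext i
  simp [hM.eigenvalues_nonneg i]

lemma matAbs_eq_cfcAbs (M : Matrix n n ℂ) : matAbs M = CFC.abs M :=
  msqrt_eq_cfcSqrt (posSemidef_conjTranspose_mul_self M)

lemma matAbs_nonneg (M : Matrix n n ℂ) : 0 ≤ matAbs M :=
  matAbs_eq_cfcAbs M ▸ CFC.abs_nonneg M

lemma matAbs_of_posSemidef {M : Matrix n n ℂ} (hM : M.PosSemidef) : matAbs M = M :=
  (matAbs_eq_cfcAbs M).trans (CFC.abs_of_nonneg M hM.nonneg)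

lemma traceNorm_eq_re_trace_cfcAbs (M : Matrix n n ℂ) : traceNorm M = (CFC.abs M).trace.re :=
  congrArg (fun N => N.trace.re) (matAbs_eq_cfcAbs M)

lemma re_trace_le_traceNorm {M : Matrix n n ℂ} (hM : M.IsHermitian) :
    M.trace.re ≤ traceNorm M :=
  (traceNorm_eq_re_trace_cfcAbs M).symm ▸ re_trace_mono (CFC.le_abs_self M hM)

lemma traceNorm_of_posSemidef {M : Matrix n n ℂ} (hM : M.PosSemidef) :
    traceNorm M = M.trace.re := by
  rw [traceNorm_eq_re_trace_cfcAbs, CFC.abs_of_nonneg M hM.nonneg]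

lemma posSemidef_of_traceNorm_le {M : Matrix n n ℂ} (hM : M.IsHermitian)
    (h : traceNorm M ≤ M.trace.re) : M.PosSemidef := by
  have hgap : (CFC.abs M - M).PosSemidef := CFC.le_abs_self M hM
  have hnonneg := hgap.trace_nonneg
  have htrace : (CFC.abs M - M).trace = 0 := by
    refine le_antisymm (Complex.le_def.mpr ⟨?_, (Complex.le_def.mp hnonneg).2.symm⟩) hnonneg
    rw [trace_sub, Complex.sub_re, ← traceNorm_eq_re_trace_cfcAbs, Complex.zero_re]
    linarith
  rw [hgap.trace_eq_zero_iff, sub_eq_zero] at htrace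
  exact htrace ▸ (CFC.abs_nonneg M).posSemidef

end MatrixAbs

section PartialTranspose

variable {A B : Type*}

@[simp]
lemma ptB_ptB (M : Matrix (A × B) (A × B) ℂ) : ptB (ptB M) = M := rfl

@[simp]
lemma trace_ptB [Fintype A] [Fintype B] (M : Matrix (A × B) (A × B) ℂ) :
    (ptB M).trace = M.trace := rfl

lemma Matrix.IsHermitian.ptB {M : Matrix (A × B) (A × B) ℂ} (hM : M.IsHermitian) :
    (ptB M).IsHermitian := by
  ext x y
  simpa [_root_.ptB, conjTranspose_apply] using congrFun₂ hM (x.1, y.2) (y.1, x.2)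

variable [Fintype A] [Fintype B] [DecidableEq A] [DecidableEq B]

lemma traceNorm_ptB_le_of_matAbs_le {ω ω' : Matrix (A × B) (A × B) ℂ}
    (h : matAbs (ptB ω) ≤ ω') : traceNorm (ptB ω) ≤ traceNorm (ptB ω') := by
  have hω' : ω'.PosSemidef := ((matAbs_nonneg _).trans h).posSemidef
  calc traceNorm (ptB ω) = (matAbs (ptB ω)).trace.re := rfl
    _ ≤ ω'.trace.re := re_trace_mono h
    _ = (ptB ω').trace.re := by rw [trace_ptB]
    _ ≤ traceNorm (ptB ω') := re_trace_le_traceNorm hω'.isHermitian.ptB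

lemma ptB_posSemidef_of_mem_PPThashSet {k : ℕ} (hk : 1 ≤ k) {ρ : Matrix (A × B) (A × B) ℂ}
    (htr : ρ.trace = 1) (hρ : ρ ∈ PPThashSet k) : (ptB ρ).PosSemidef := by
  obtain ⟨hρ, ω, rfl, hchain, hnorm⟩ := hρ
  have hmono : ∀ i, 1 ≤ i → i ≤ k → traceNorm (ptB (ω 1)) ≤ traceNorm (ptB (ω i)) := by
    intro i hi
    induction i, hi using Nat.le_induction with
    | base => exact fun _ => le_rfl
    | succ i hi ih =>
      exact fun hik => (ih (by omega)).trans
        (traceNorm_ptB_le_of_matAbs_le (hchain i hi (by omega)))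
  refine posSemidef_of_traceNorm_le hρ.isHermitian.ptB ?_
  rw [trace_ptB, htr, Complex.one_re]
  exact (hmono k hk le_rfl).trans hnorm

lemma mem_PPThashSet_of_ptB_posSemidef (k : ℕ) {ρ : Matrix (A × B) (A × B) ℂ}
    (hρ : ρ.PosSemidef) (htr : ρ.trace = 1) (hppt : (ptB ρ).PosSemidef) :
    ρ ∈ PPThashSet k := by
  set ω : ℕ → Matrix (A × B) (A × B) ℂ := fun i => if Even i then ptB ρ else ρ
  have hω_succ (i : ℕ) : ω (i + 1) = ptB (ω i) := by
    by_cases h : Even i <;> simp [ω, h, Nat.even_add_one]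
  have hω_psd (i : ℕ) : (ω i).PosSemidef := by by_cases h : Even i <;> simp [ω, h, hρ, hppt]
  have hω_trace (i : ℕ) : (ω i).trace = 1 := by by_cases h : Even i <;> simp [ω, h, htr]
  refine ⟨hρ, ω, by simp [ω], fun i _ _ => ?_, ?_⟩
  · rw [← hω_succ, matAbs_of_posSemidef (hω_psd _), sub_self]
    exact .zero
  · rw [← hω_succ, traceNorm_of_posSemidef (hω_psd _), hω_trace, Complex.one_re]

end PartialTranspose

theorem mem_PPThashSet_iff_ppt {A B : Type*}
    [Fintype A] [Fintype B] [DecidableEq A] [DecidableEq B]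
    (k : ℕ) (hk : 2 ≤ k) (ρ : Matrix (A × B) (A × B) ℂ)
    (hρ : ρ.PosSemidef) (htr : ρ.trace = 1) :
    ρ ∈ PPThashSet (A := A) (B := B) k ↔ (ptB ρ).PosSemidef :=
  ⟨ptB_posSemidef_of_mem_PPThashSet (by omega) htr, mem_PPThashSet_of_ptB_posSemidef k hρ htr⟩
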